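/- Let σ > 0, θ(r) = (σ²/2 + √(σ⁴/4 + 2σ² r))/σ², and let F, G be probability distributions on (0,∞) with discount functions h_F, h_G. If h_F(t) ≥ h_G(t) for all t ≥ 0, then ∫₀^∞ ((θ(r)-1)/r) dF(r) ≥ ∫₀^∞ ((θ(r)-1)/r) dG(r), assuming both integrals are finite. -/

import Mathlib

open Real MeasureTheory Set

/-- The positive root `θ(r)` of `(1/2)σ²θ² - (1/2)σ²θ - r = 0`. -/
noncomputable def θfun (σ r : ℝ) : ℝ :=
  (σ^2 / 2 + Real.sqrt (σ^4 / 4 + 2 * σ^2 * r)) / σ^2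

/-- The discount function induced by the weighting distribution `F`. -/
noncomputable def discount (F : Measure ℝ) (t : ℝ) : ℝ := ∫ r, Real.exp (-r * t) ∂F

open scoped ENNReal

/-!
With `a = σ²/8` one has `θ(r) - 1 = (√2/σ)(√(a + r) - √a)`,
`(√(a + r) - √a)/r = ½ ∫₀¹ (a + r t)^(-1/2) dt`, and
`(a + r t)^(-1/2) = π^(-1/2) ∫₀^∞ u^(-1/2) e^(-a u) e^(-r t u) du` (a Gamma integral).
So `(θ(r) - 1)/r` is a mixture, with nonnegative weights, of the exponentials `e^(-r s)`,
`s = t u ≥ 0`. By Tonelli its integral against `F` is the same mixture of the values `h_F(t u)`,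
which is monotone in `h_F`.
-/

section LaplaceMixture

variable {X : Type*} [MeasurableSpace X] {ν : Measure X} [SFinite ν] {K : X → ℝ≥0∞} {φ : X → ℝ}
  {f : ℝ → ℝ} {F G : Measure ℝ} [IsFiniteMeasure F] [IsFiniteMeasure G]

lemma ofReal_discount_eq_lintegral (hF : ∀ᵐ r ∂F, 0 ≤ r) {t : ℝ} (ht : 0 ≤ t) :
    ENNReal.ofReal (discount F t) = ∫⁻ r, ENNReal.ofReal (exp (-r * t)) ∂F := by
  have hle : ∀ᵐ r ∂F, ‖exp (-r * t)‖ ≤ 1 := hF.mono fun r hr => by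
    rw [norm_of_nonneg (exp_pos _).le, exp_le_one_iff]
    nlinarith
  exact ofReal_integral_eq_lintegral_ofReal
    (Integrable.of_bound (by fun_prop) 1 hle) (ae_of_all _ fun r => (exp_pos _).le)

lemma lintegral_ofReal_eq_lintegral_discount (hK : Measurable K) (hφ : Measurable φ)
    (hφ0 : ∀ᵐ x ∂ν, 0 ≤ φ x)
    (hf : ∀ r, 0 < r → ENNReal.ofReal (f r) = ∫⁻ x, K x * ENNReal.ofReal (exp (-r * φ x)) ∂ν)
    (hF : ∀ᵐ r ∂F, 0 < r) :
    ∫⁻ r, ENNReal.ofReal (f r) ∂F = ∫⁻ x, K x * ENNReal.ofReal (discount F (φ x)) ∂ν := by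
  calc ∫⁻ r, ENNReal.ofReal (f r) ∂F
      = ∫⁻ r, ∫⁻ x, K x * ENNReal.ofReal (exp (-r * φ x)) ∂ν ∂F :=
        lintegral_congr_ae (hF.mono hf)
    _ = ∫⁻ x, ∫⁻ r, K x * ENNReal.ofReal (exp (-r * φ x)) ∂F ∂ν :=
        lintegral_lintegral_swap (by fun_prop)
    _ = ∫⁻ x, K x * ENNReal.ofReal (discount F (φ x)) ∂ν := by
        refine lintegral_congr_ae (hφ0.mono fun x hx => ?_)
        dsimp only
        rw [lintegral_const_mul _ (by fun_prop),
          ofReal_discount_eq_lintegral (hF.mono fun r hr => hr.le) hx]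

theorem integral_le_integral_of_discount_le (hK : Measurable K) (hφ : Measurable φ)
    (hφ0 : ∀ᵐ x ∂ν, 0 ≤ φ x)
    (hf : ∀ r, 0 < r → ENNReal.ofReal (f r) = ∫⁻ x, K x * ENNReal.ofReal (exp (-r * φ x)) ∂ν)
    (hf0 : ∀ r, 0 < r → 0 ≤ f r) (hF : ∀ᵐ r ∂F, 0 < r) (hG : ∀ᵐ r ∂G, 0 < r)
    (hdom : ∀ t, 0 ≤ t → discount G t ≤ discount F t) (hfF : Integrable f F) :
    ∫ r, f r ∂G ≤ ∫ r, f r ∂F := by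
  by_cases hfG : AEStronglyMeasurable f G
  · have hle : ∫⁻ r, ENNReal.ofReal (f r) ∂G ≤ ∫⁻ r, ENNReal.ofReal (f r) ∂F := by
      rw [lintegral_ofReal_eq_lintegral_discount hK hφ hφ0 hf hF,
        lintegral_ofReal_eq_lintegral_discount hK hφ hφ0 hf hG]
      exact lintegral_mono_ae (hφ0.mono fun x hx => by gcongr; exact hdom _ hx)
    rw [integral_eq_lintegral_of_nonneg_ae (hG.mono hf0) hfG,
      integral_eq_lintegral_of_nonneg_ae (hF.mono hf0) hfF.1]
    exact ENNReal.toReal_mono hfF.lintegral_lt_top.ne hle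
  · rw [integral_non_aestronglyMeasurable hfG]
    exact integral_nonneg_of_ae (hF.mono hf0)

end LaplaceMixture

lemma lintegral_rpow_neg_half_mul_exp {b : ℝ} (hb : 0 < b) :
    ∫⁻ u in Ioi 0, ENNReal.ofReal (u ^ (-(1 / 2) : ℝ) * exp (-(b * u)))
      = ENNReal.ofReal (√π * b ^ (-(1 / 2) : ℝ)) := by
  have hGamma := integral_rpow_mul_exp_neg_mul_Ioi (by norm_num : (0 : ℝ) < 1 / 2) hb
  have hint : IntegrableOn (fun u : ℝ => u ^ (-(1 / 2) : ℝ) * exp (-(b * u))) (Ioi 0) := by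
    simpa [neg_mul] using integrableOn_rpow_mul_exp_neg_mul_rpow (by norm_num) zero_lt_one hb
  rw [← ofReal_integral_eq_lintegral_ofReal hint
    ((ae_restrict_iff' measurableSet_Ioi).2 (ae_of_all _ fun u (hu : 0 < u) => by positivity))]
  norm_num at hGamma
  rw [hGamma, Gamma_one_half_eq, inv_rpow hb.le, ← rpow_neg hb.le, mul_comm]

lemma integral_rpow_neg_half_add_mul {a r : ℝ} (hr : 0 < r) :
    ∫ t in (0 : ℝ)..1, (a + r * t) ^ (-(1 / 2) : ℝ) = 2 * (√(a + r) - √a) / r := by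
  rw [intervalIntegral.integral_comp_add_mul (fun x => x ^ (-(1 / 2) : ℝ)) hr.ne',
    integral_rpow (Or.inl (by norm_num)), sqrt_eq_rpow, sqrt_eq_rpow]
  norm_num
  field_simp

lemma theta_sub_one_eq {σ : ℝ} (hσ : 0 < σ) (r : ℝ) :
    θfun σ r - 1 = √2 / σ * (√(σ ^ 2 / 8 + r) - √(σ ^ 2 / 8)) := by
  have hsqrt : √(σ ^ 4 / 4 + 2 * σ ^ 2 * r) = √2 * σ * √(σ ^ 2 / 8 + r) := by
    rw [show σ ^ 4 / 4 + 2 * σ ^ 2 * r = (√2 * σ) ^ 2 * (σ ^ 2 / 8 + r) by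
        rw [mul_pow, sq_sqrt zero_le_two]; ring,
      sqrt_mul (sq_nonneg _), sqrt_sq (by positivity)]
  have hsqrt0 : √(σ ^ 2 / 8) = σ / (2 * √2) := by
    rw [show σ ^ 2 / 8 = (σ / (2 * √2)) ^ 2 by
        rw [div_pow, mul_pow, sq_sqrt zero_le_two]; ring,
      sqrt_sq (by positivity)]
  rw [θfun, hsqrt, hsqrt0]
  field_simp
  ring

lemma ofReal_theta_sub_one_div_eq_lintegral {σ r : ℝ} (hσ : 0 < σ) (hr : 0 < r) :
    ENNReal.ofReal ((θfun σ r - 1) / r) =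
      ∫⁻ p, ENNReal.ofReal ((σ * √(2 * π))⁻¹ * p.2 ^ (-(1 / 2) : ℝ) * exp (-(σ ^ 2 / 8 * p.2)))
          * ENNReal.ofReal (exp (-r * (p.1 * p.2)))
        ∂(volume.restrict (Ioc (0 : ℝ) 1)).prod (volume.restrict (Ioi (0 : ℝ))) := by
  set c := (σ * √(2 * π))⁻¹ with hc_def
  have hc : 0 ≤ c := by positivity
  have hpos : ∀ t, 0 ≤ t → 0 < σ ^ 2 / 8 + r * t := fun t ht => by positivity
  have hinner : ∀ t ∈ Ioc (0 : ℝ) 1,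
      ∫⁻ u in Ioi 0, ENNReal.ofReal (c * u ^ (-(1 / 2) : ℝ) * exp (-(σ ^ 2 / 8 * u)))
          * ENNReal.ofReal (exp (-r * (t * u)))
        = ENNReal.ofReal (c * (√π * (σ ^ 2 / 8 + r * t) ^ (-(1 / 2) : ℝ))) := by
    intro t ht
    rw [ENNReal.ofReal_mul hc, ← lintegral_rpow_neg_half_mul_exp (hpos t ht.1.le),
      ← lintegral_const_mul' _ _ ENNReal.ofReal_ne_top]
    refine lintegral_congr fun u => ?_
    rw [← ENNReal.ofReal_mul' (exp_pos _).le, ← ENNReal.ofReal_mul hc,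
      show -((σ ^ 2 / 8 + r * t) * u) = -(σ ^ 2 / 8 * u) + -r * (t * u) by ring, exp_add]
    ring_nf
  have hint :
      IntegrableOn (fun t => c * (√π * (σ ^ 2 / 8 + r * t) ^ (-(1 / 2) : ℝ))) (Ioc 0 1) := by
    refine (intervalIntegrable_iff_integrableOn_Ioc_of_le zero_le_one).1
      (ContinuousOn.intervalIntegrable ?_)
    refine continuousOn_const.mul (continuousOn_const.mul
      ((continuousOn_const.add (continuousOn_const.mul continuousOn_id)).rpow_const ?_))
    rw [uIcc_of_le zero_le_one]
    exact fun t ht => Or.inl (hpos t ht.1).ne'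
  rw [lintegral_prod _ (by fun_prop), setLIntegral_congr_fun measurableSet_Ioc hinner,
    ← ofReal_integral_eq_lintegral_ofReal hint
      ((ae_restrict_iff' measurableSet_Ioc).2 (ae_of_all _ fun t ht => by
        have := hpos t ht.1.le; positivity)),
    ← intervalIntegral.integral_of_le zero_le_one, intervalIntegral.integral_const_mul,
    intervalIntegral.integral_const_mul, integral_rpow_neg_half_add_mul hr, theta_sub_one_eq hσ,
    hc_def, sqrt_mul zero_le_two]
  congr 1
  generalize √(σ ^ 2 / 8 + r) - √(σ ^ 2 / 8) = D
  field_simp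
  rw [sq_sqrt zero_le_two, mul_comm]

lemma theta_sub_one_div_nonneg {σ r : ℝ} (hσ : 0 < σ) (hr : 0 ≤ r) :
    0 ≤ (θfun σ r - 1) / r := by
  rw [theta_sub_one_eq hσ]
  exact div_nonneg (mul_nonneg (by positivity) (sub_nonneg.2 (sqrt_le_sqrt (by linarith)))) hr

theorem stmt10_general (σ : ℝ) (hσ : 0 < σ) (F G : Measure ℝ)
    [IsProbabilityMeasure F] [IsProbabilityMeasure G]
    (hFc : F (Ioi (0:ℝ))ᶜ = 0) (hGc : G (Ioi (0:ℝ))ᶜ = 0)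
    (hdom : ∀ t : ℝ, 0 ≤ t → discount F t ≥ discount G t)
    (hIntF : Integrable (fun r => (θfun σ r - 1) / r) F) :
    ∫ r, (θfun σ r - 1) / r ∂F ≥ ∫ r, (θfun σ r - 1) / r ∂G := by
  have hprod_nonneg :
      ∀ᵐ p ∂(volume.restrict (Ioc (0 : ℝ) 1)).prod (volume.restrict (Ioi (0 : ℝ))),
        0 ≤ p.1 * p.2 := by
    rw [Measure.prod_restrict, ae_restrict_iff' (measurableSet_Ioc.prod measurableSet_Ioi)]
    exact ae_of_all _ fun p hp => mul_nonneg hp.1.1.le (le_of_lt hp.2)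
  exact integral_le_integral_of_discount_le (by fun_prop) (by fun_prop) hprod_nonneg
    (fun r hr => ofReal_theta_sub_one_div_eq_lintegral hσ hr)
    (fun r hr => theta_sub_one_div_nonneg hσ hr.le) (mem_ae_iff.2 hFc) (mem_ae_iff.2 hGc)
    hdom hIntF

theorem stmt10 (σ : ℝ) (hσ : 0 < σ) (F G : Measure ℝ)
    [IsProbabilityMeasure F] [IsProbabilityMeasure G]
    (hFc : F (Ioi (0:ℝ))ᶜ = 0) (hGc : G (Ioi (0:ℝ))ᶜ = 0)
    (hdom : ∀ t : ℝ, 0 ≤ t → discount F t ≥ discount G t)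
    (hIntF : Integrable (fun r => (θfun σ r - 1) / r) F)
    (hIntG : Integrable (fun r => (θfun σ r - 1) / r) G) :
    ∫ r, (θfun σ r - 1) / r ∂F ≥ ∫ r, (θfun σ r - 1) / r ∂G :=
  stmt10_general σ hσ F G hFc hGc hdom hIntF
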